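/- For every δ ∈ ℂ and 0 ≤ k ≤ N−1, the k-th GMRES residual satisfies r_k(δ) = p_k(A)·b, where p_k(z) = σ_k(δ)^{−2} · Σ_{j=0}^{k} conj(q_j(δ))·q_j(z); in particular ‖r_k(δ)‖ = ‖b‖/σ_k(δ). -/

import Mathlib

open Polynomial Matrix Finset

/-- The standard inner product `x^* y` on `ℂ^n` (conjugate-linear in the first slot). -/
noncomputable def inn {n : ℕ} (x y : Fin n → ℂ) : ℂ := ∑ i, (starRingEnd ℂ) (x i) * y i

/-- The Euclidean norm on `ℂ^n`. -/
noncomputable def nrm {n : ℕ} (x : Fin n → ℂ) : ℝ := Real.sqrt (inn x x).re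

/-- `σ_k(δ) = sqrt(Σ_{j=0}^k |q_j(δ)|²)`. -/
noncomputable def sigmaP (q : ℕ → Polynomial ℂ) (δ : ℂ) (k : ℕ) : ℝ :=
  Real.sqrt (∑ j ∈ Finset.range (k + 1), ‖(q j).eval δ‖ ^ 2)

/-! The Arnoldi relation for `A` and the recurrence for the `q_j` have the same coefficients, so
`q_j(A) b = ‖b‖ v_j`. Evaluating the recurrence at `δ` shows that
`t = ∑_{j ≤ k} conj (q_j(δ)) v_j` is orthogonal to every `(A - δ I) v_j` with `j < k`.
Since `span {v_0, …, v_k} ⊆ ℂ v_0 + (A - δ I) span {v_0, …, v_{k-1}}`, `⟨v_0, t⟩ = 1` and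
`‖t‖² = σ_k(δ)²`, the vector `v_0 - t / σ_k(δ)²` is orthogonal to `t` and therefore lies in
`(A - δ I) span {v_0, …, v_{k-1}}`. Hence `‖b‖ t / σ_k(δ)² = p_k(A) b` is the GMRES residual. -/

section InnerProduct

variable {n : ℕ}

theorem inn_eq_star_dotProduct (x y : Fin n → ℂ) : inn x y = star x ⬝ᵥ y := rfl

theorem inn_add_left (x y z : Fin n → ℂ) : inn (x + y) z = inn x z + inn y z := by
  simp only [inn_eq_star_dotProduct, star_add, add_dotProduct]

theorem inn_smul_left (a : ℂ) (x y : Fin n → ℂ) :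
    inn (a • x) y = starRingEnd ℂ a * inn x y := by
  simp only [inn_eq_star_dotProduct, star_smul, smul_dotProduct, smul_eq_mul]
  rfl

theorem inn_sub_left (x y z : Fin n → ℂ) : inn (x - y) z = inn x z - inn y z := by
  simp only [inn_eq_star_dotProduct, star_sub, sub_dotProduct]

theorem inn_sub_right (x y z : Fin n → ℂ) : inn x (y - z) = inn x y - inn x z :=
  dotProduct_sub _ _ _

theorem inn_smul_right (a : ℂ) (x y : Fin n → ℂ) : inn x (a • y) = a * inn x y :=
  dotProduct_smul _ _ _

theorem inn_sum_left {ι : Type*} (s : Finset ι) (f : ι → Fin n → ℂ) (y : Fin n → ℂ) :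
    inn (∑ i ∈ s, f i) y = ∑ i ∈ s, inn (f i) y := by
  simp only [inn_eq_star_dotProduct, star_sum, sum_dotProduct]

theorem inn_sum_right {ι : Type*} (x : Fin n → ℂ) (s : Finset ι) (f : ι → Fin n → ℂ) :
    inn x (∑ i ∈ s, f i) = ∑ i ∈ s, inn x (f i) :=
  dotProduct_sum _ _ _

open scoped ComplexOrder in
theorem inn_self_eq_zero {x : Fin n → ℂ} : inn x x = 0 ↔ x = 0 :=
  dotProduct_star_self_eq_zero

theorem nrm_eq_norm (x : Fin n → ℂ) : nrm x = ‖(WithLp.toLp 2 x : EuclideanSpace ℂ (Fin n))‖ := by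
  simp [nrm, EuclideanSpace.norm_eq, inn, Complex.conj_mul', ← Complex.ofReal_pow]

theorem nrm_smul (a : ℂ) (x : Fin n → ℂ) : nrm (a • x) = ‖a‖ * nrm x := by
  simp only [nrm_eq_norm, WithLp.toLp_smul, norm_smul]

theorem nrm_pos {x : Fin n → ℂ} (hx : x ≠ 0) : 0 < nrm x := by
  simpa [nrm_eq_norm] using hx

theorem inn_eq_zero_of_mem_span {s : Set (Fin n → ℂ)} {t : Fin n → ℂ}
    (hs : ∀ x ∈ s, inn x t = 0) {y : Fin n → ℂ} (hy : y ∈ Submodule.span ℂ s) :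
    inn y t = 0 := by
  induction hy using Submodule.span_induction with
  | mem x hx => exact hs x hx
  | zero => simp [inn]
  | add x y _ _ hx hy => rw [inn_add_left, hx, hy, add_zero]
  | smul a x _ hx => rw [inn_smul_left, hx, mul_zero]

theorem eq_of_sub_mem_of_forall_inn_eq_zero {W : Submodule ℂ (Fin n → ℂ)} {x y : Fin n → ℂ}
    (hxy : x - y ∈ W) (hx : ∀ w ∈ W, inn w x = 0) (hy : ∀ w ∈ W, inn w y = 0) : x = y := by
  rw [← sub_eq_zero, ← inn_self_eq_zero, inn_sub_right, hx _ hxy, hy _ hxy, sub_zero]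

theorem mem_of_mem_sup_of_inn_eq_zero {W : Submodule ℂ (Fin n → ℂ)} {e x t : Fin n → ℂ}
    (hx : x ∈ (ℂ ∙ e) ⊔ W) (hW : ∀ w ∈ W, inn w t = 0) (hxt : inn x t = 0)
    (het : inn e t ≠ 0) : x ∈ W := by
  obtain ⟨_, hy, z, hz, rfl⟩ := Submodule.mem_sup.mp hx
  obtain ⟨a, rfl⟩ := Submodule.mem_span_singleton.mp hy
  rw [inn_add_left, inn_smul_left, hW z hz, add_zero] at hxt
  have ha : a = 0 := by simpa [het] using hxt
  simpa [ha] using hz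

def OrthonormalUpTo (v : ℕ → Fin n → ℂ) (N : ℕ) : Prop :=
  ∀ i j : ℕ, i < N → j < N → inn (v i) (v j) = if i = j then 1 else 0

variable {N : ℕ} {v : ℕ → Fin n → ℂ}

theorem OrthonormalUpTo.inn_sum_smul (horth : OrthonormalUpTo v N)
    {s : Finset ℕ} (hs : ∀ l ∈ s, l < N) (c : ℕ → ℂ) {i : ℕ} (hi : i ∈ s) :
    inn (v i) (∑ l ∈ s, c l • v l) = c i := by
  rw [inn_sum_right, Finset.sum_eq_single_of_mem i hi]
  · rw [inn_smul_right, horth i i (hs i hi) (hs i hi), if_pos rfl, mul_one]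
  · intro l hl hli
    rw [inn_smul_right, horth i l (hs i hi) (hs l hl), if_neg (Ne.symm hli), mul_zero]

theorem OrthonormalUpTo.inn_sum_smul_self (horth : OrthonormalUpTo v N)
    {s : Finset ℕ} (hs : ∀ l ∈ s, l < N) (c : ℕ → ℂ) :
    inn (∑ l ∈ s, c l • v l) (∑ l ∈ s, c l • v l) = ∑ l ∈ s, starRingEnd ℂ (c l) * c l := by
  rw [inn_sum_left]
  refine Finset.sum_congr rfl fun l hl => ?_
  rw [inn_smul_left, horth.inn_sum_smul hs c hl]

end InnerProduct

section Arnoldi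

variable {n N : ℕ} {A : Matrix (Fin n) (Fin n) ℂ} {v : ℕ → Fin n → ℂ} {h : ℕ → ℕ → ℂ}
  {q : ℕ → ℂ[X]}

/-- Indices start at `0`: `v j` is the paper's `v_{j+1}` and `h i j` is `h_{i+1,j+1}`. -/
def ArnoldiRelation (A : Matrix (Fin n) (Fin n) ℂ) (v : ℕ → Fin n → ℂ) (h : ℕ → ℕ → ℂ)
    (N : ℕ) : Prop :=
  ∀ j, j + 1 < N → A *ᵥ v j = ∑ i ∈ range (j + 2), h i j • v i

def HessenbergRecurrence (q : ℕ → ℂ[X]) (h : ℕ → ℕ → ℂ) (N : ℕ) : Prop :=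
  ∀ j, j + 1 < N → C (h (j + 1) j) * q (j + 1) = X * q j - ∑ i ∈ range (j + 1), C (h i j) * q i

/-- The space `(A - δ I) span {v₀, …, v_{k-1}}` onto which GMRES projects `b`. -/
def shiftedKrylov (A : Matrix (Fin n) (Fin n) ℂ) (δ : ℂ) (v : ℕ → Fin n → ℂ) (k : ℕ) :
    Submodule ℂ (Fin n → ℂ) :=
  Submodule.span ℂ {x | ∃ j < k, x = (A - δ • 1) *ᵥ v j}

def residualDirection (q : ℕ → ℂ[X]) (v : ℕ → Fin n → ℂ) (δ : ℂ) (k : ℕ) : Fin n → ℂ :=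
  ∑ l ∈ range (k + 1), starRingEnd ℂ ((q l).eval δ) • v l

theorem aeval_mulVec_eq_of_arnoldi (harn : ArnoldiRelation A v h N)
    (hrec : HessenbergRecurrence q h N) (hsub : ∀ j, j + 1 < N → h (j + 1) j ≠ 0)
    (hq0 : q 0 = 1) : ∀ j < N, aeval A (q j) *ᵥ v 0 = v j := by
  intro j
  induction j using Nat.strong_induction_on with
  | _ j ih =>
    intro hj
    match j with
    | 0 => simp [hq0]
    | j + 1 =>
      have hrecA := congrArg (fun p => aeval A p *ᵥ v 0) (hrec j hj)
      simp only [← smul_eq_C_mul, map_smul, map_sub, map_sum, map_mul, aeval_X, smul_mulVec,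
        sub_mulVec, sum_mulVec, ← mulVec_mulVec] at hrecA
      have hlower : ∑ i ∈ range (j + 1), h i j • aeval A (q i) *ᵥ v 0 =
          ∑ i ∈ range (j + 1), h i j • v i :=
        Finset.sum_congr rfl fun i hi => by
          rw [ih i (by simp at hi; omega) (by simp at hi; omega)]
      rw [ih j j.lt_succ_self (by omega), harn j hj, sum_range_succ, hlower,
        add_sub_cancel_left] at hrecA
      exact smul_right_injective _ (hsub j hj) hrecA

theorem sum_mul_eval_eq_of_recurrence (hrec : HessenbergRecurrence q h N) (δ : ℂ) {j : ℕ}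
    (hj : j + 1 < N) : ∑ i ∈ range (j + 2), h i j * (q i).eval δ = δ * (q j).eval δ := by
  have := congrArg (eval δ) (hrec j hj)
  simp only [eval_mul, eval_C, eval_sub, eval_X, eval_finsetSum] at this
  rw [sum_range_succ]
  linear_combination this

theorem inn_shiftedKrylov_residualDirection (horth : OrthonormalUpTo v N)
    (harn : ArnoldiRelation A v h N) (hrec : HessenbergRecurrence q h N) (δ : ℂ) {k : ℕ}
    (hk : k < N) : ∀ y ∈ shiftedKrylov A δ v k, inn y (residualDirection q v δ k) = 0 := by
  have hs : ∀ l ∈ range (k + 1), l < N := fun l hl => by simp at hl; omega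
  have hcoef : ∀ i ≤ k, inn (v i) (residualDirection q v δ k) = starRingEnd ℂ ((q i).eval δ) :=
    fun i hi => horth.inn_sum_smul hs _ (by simp; omega)
  refine fun y => inn_eq_zero_of_mem_span ?_
  rintro _ ⟨j, hj, rfl⟩
  rw [sub_mulVec, smul_mulVec, one_mulVec, harn j (by omega), inn_sub_left, inn_smul_left, inn_sum_left, hcoef j hj.le]
  have hsum : ∑ i ∈ range (j + 2), inn (h i j • v i) (residualDirection q v δ k) =
      starRingEnd ℂ (∑ i ∈ range (j + 2), h i j * (q i).eval δ) := by
    rw [map_sum]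
    refine Finset.sum_congr rfl fun i hi => ?_
    rw [inn_smul_left, hcoef i (by simp at hi; omega), map_mul]
  rw [hsum, sum_mul_eval_eq_of_recurrence hrec δ (by omega), map_mul, sub_self]

theorem mem_sup_shiftedKrylov (harn : ArnoldiRelation A v h N)
    (hsub : ∀ j, j + 1 < N → h (j + 1) j ≠ 0) (δ : ℂ) {k : ℕ} (hk : k < N) :
    ∀ j ≤ k, v j ∈ (ℂ ∙ v 0) ⊔ shiftedKrylov A δ v k := by
  intro j
  induction j using Nat.strong_induction_on with
  | _ j ih =>
    intro hj
    match j with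
    | 0 => exact Submodule.mem_sup_left (Submodule.mem_span_singleton_self _)
    | j + 1 =>
      have hnext : h (j + 1) j • v (j + 1) =
          (A - δ • 1) *ᵥ v j + δ • v j - ∑ i ∈ range (j + 1), h i j • v i := by
        rw [sub_mulVec, smul_mulVec, one_mulVec, harn j (by omega), sum_range_succ]
        abel
      have hmem : h (j + 1) j • v (j + 1) ∈ (ℂ ∙ v 0) ⊔ shiftedKrylov A δ v k := by
        rw [hnext]
        refine Submodule.sub_mem _ (Submodule.add_mem _ ?_ ?_) ?_
        · exact Submodule.mem_sup_right (Submodule.subset_span ⟨j, by omega, rfl⟩)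
        · exact Submodule.smul_mem _ _ (ih j j.lt_succ_self (by omega))
        · exact Submodule.sum_mem _ fun i hi =>
            Submodule.smul_mem _ _ (ih i (by simp at hi; omega) (by simp at hi; omega))
      simpa [hsub j (by omega)] using Submodule.smul_mem _ (h (j + 1) j)⁻¹ hmem

theorem sigmaP_sq (q : ℕ → ℂ[X]) (δ : ℂ) (k : ℕ) :
    sigmaP q δ k ^ 2 = ∑ j ∈ range (k + 1), ‖(q j).eval δ‖ ^ 2 :=
  Real.sq_sqrt (Finset.sum_nonneg fun _ _ => sq_nonneg _)

theorem sigmaP_pos (hq0 : q 0 = 1) (δ : ℂ) (k : ℕ) : 0 < sigmaP q δ k := by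
  refine Real.sqrt_pos.mpr (lt_of_lt_of_le one_pos ?_)
  calc (1 : ℝ) = ‖(q 0).eval δ‖ ^ 2 := by simp [hq0]
    _ ≤ _ := Finset.single_le_sum (f := fun j => ‖(q j).eval δ‖ ^ 2)
        (fun _ _ => sq_nonneg _) (by simp)

theorem inn_residualDirection_self (horth : OrthonormalUpTo v N)
    (δ : ℂ) {k : ℕ} (hk : k < N) :
    inn (residualDirection q v δ k) (residualDirection q v δ k) = (sigmaP q δ k : ℂ) ^ 2 := by
  rw [residualDirection, horth.inn_sum_smul_self
    (fun l hl => by simp at hl; omega), ← Complex.ofReal_pow, sigmaP_sq]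
  push_cast
  exact Finset.sum_congr rfl fun l _ => by rw [Complex.conj_conj, Complex.mul_conj']

theorem nrm_residualDirection (horth : OrthonormalUpTo v N)
    (δ : ℂ) {k : ℕ} (hk : k < N) :
    nrm (residualDirection q v δ k) = sigmaP q δ k := by
  rw [nrm, inn_residualDirection_self horth δ hk, ← Complex.ofReal_pow, Complex.ofReal_re]
  exact Real.sqrt_sq (Real.sqrt_nonneg _)

theorem sub_smul_residualDirection_mem_shiftedKrylov (horth : OrthonormalUpTo v N)
    (harn : ArnoldiRelation A v h N) (hrec : HessenbergRecurrence q h N)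
    (hsub : ∀ j, j + 1 < N → h (j + 1) j ≠ 0) (hq0 : q 0 = 1) (δ : ℂ) {k : ℕ} (hk : k < N) :
    v 0 - ((sigmaP q δ k : ℂ) ^ 2)⁻¹ • residualDirection q v δ k ∈ shiftedKrylov A δ v k := by
  have hσ : (sigmaP q δ k : ℂ) ≠ 0 := by exact_mod_cast (sigmaP_pos hq0 δ k).ne'
  have hv0 : inn (v 0) (residualDirection q v δ k) = 1 := by
    rw [residualDirection, horth.inn_sum_smul (fun l hl => by simp at hl; omega)
      _ (by simp), hq0, eval_one, map_one]
  refine mem_of_mem_sup_of_inn_eq_zero ?_ (inn_shiftedKrylov_residualDirection horth harn hrec δ hk)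
    ?_ (hv0 ▸ one_ne_zero)
  · refine Submodule.sub_mem _ (mem_sup_shiftedKrylov harn hsub δ hk 0 k.zero_le) ?_
    exact Submodule.smul_mem _ _ (Submodule.sum_mem _ fun l hl => Submodule.smul_mem _ _
      (mem_sup_shiftedKrylov harn hsub δ hk l (by simp at hl; omega)))
  · rw [inn_sub_left, inn_smul_left, hv0, inn_residualDirection_self horth δ hk, map_inv₀,
      map_pow, Complex.conj_ofReal, inv_mul_cancel₀ (pow_ne_zero 2 hσ), sub_self]

theorem residual_eq_smul_residualDirection (horth : OrthonormalUpTo v N)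
    (harn : ArnoldiRelation A v h N) (hrec : HessenbergRecurrence q h N)
    (hsub : ∀ j, j + 1 < N → h (j + 1) j ≠ 0) (hq0 : q 0 = 1) (δ : ℂ) {k : ℕ} (hk : k < N)
    {β : ℂ} {b r : Fin n → ℂ} (hb : b = β • v 0) (hr : b - r ∈ shiftedKrylov A δ v k)
    (hr_perp : ∀ w ∈ shiftedKrylov A δ v k, inn w r = 0) :
    r = (β / (sigmaP q δ k : ℂ) ^ 2) • residualDirection q v δ k := by
  have ht := inn_shiftedKrylov_residualDirection horth harn hrec δ hk
  refine eq_of_sub_mem_of_forall_inn_eq_zero ?_ hr_perp fun w hw => ?_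
  · have hscaled := Submodule.smul_mem _ β
      (sub_smul_residualDirection_mem_shiftedKrylov horth harn hrec hsub hq0 δ hk)
    have : r - (β / (sigmaP q δ k : ℂ) ^ 2) • residualDirection q v δ k =
        β • (v 0 - ((sigmaP q δ k : ℂ) ^ 2)⁻¹ • residualDirection q v δ k) - (b - r) := by
      rw [hb, smul_sub, smul_smul, div_eq_mul_inv]
      abel
    rw [this]
    exact Submodule.sub_mem _ hscaled hr
  · rw [inn_smul_right, ht w hw, mul_zero]

theorem aeval_sum_C_mul_mulVec {x : Fin n → ℂ} {k : ℕ} (hq : ∀ j ≤ k, aeval A (q j) *ᵥ x = v j)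
    (c : ℕ → ℂ) :
    aeval A (∑ j ∈ range (k + 1), C (c j) * q j) *ᵥ x = ∑ j ∈ range (k + 1), c j • v j := by
  rw [map_sum, sum_mulVec]
  refine Finset.sum_congr rfl fun j hj => ?_
  rw [← smul_eq_C_mul, map_smul, smul_mulVec, hq j (by simp at hj; omega)]

end Arnoldi

section MatrixEntries

variable {n N : ℕ}

def extendByZero (H : Matrix (Fin N) (Fin N) ℂ) (i j : ℕ) : ℂ :=
  if h : i < N ∧ j < N then H ⟨i, h.1⟩ ⟨j, h.2⟩ else 0

theorem extendByZero_apply (H : Matrix (Fin N) (Fin N) ℂ) {i j : ℕ} (hi : i < N) (hj : j < N) :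
    extendByZero H i j = H ⟨i, hi⟩ ⟨j, hj⟩ :=
  dif_pos ⟨hi, hj⟩

theorem arnoldiRelation_extendByZero {A : Matrix (Fin n) (Fin n) ℂ} {v : ℕ → Fin n → ℂ}
    {H : Matrix (Fin N) (Fin N) ℂ}
    (harn : ∀ (k : ℕ) (hk : k + 1 < N),
      A.mulVec (v k) = ∑ j : Fin (k + 2),
        H ⟨(j : ℕ), Nat.lt_of_le_of_lt (Nat.lt_succ_iff.mp j.isLt) hk⟩
          ⟨k, Nat.lt_of_succ_lt hk⟩ • v (j : ℕ)) :
    ArnoldiRelation A v (extendByZero H) N := by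
  intro k hk
  rw [harn k hk, sum_range]
  exact Finset.sum_congr rfl fun j _ => by rw [extendByZero_apply]

theorem hessenbergRecurrence_extendByZero {q : ℕ → ℂ[X]} {H : Matrix (Fin N) (Fin N) ℂ}
    (hqrec : ∀ (k : ℕ) (hk : k + 1 < N),
      Polynomial.C (H ⟨k + 1, hk⟩ ⟨k, Nat.lt_of_succ_lt hk⟩) * q (k + 1) =
        Polynomial.X * q k -
          ∑ j : Fin (k + 1),
            Polynomial.C (H ⟨(j : ℕ), Nat.lt_trans j.isLt hk⟩ ⟨k, Nat.lt_of_succ_lt hk⟩) *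
              q (j : ℕ)) :
    HessenbergRecurrence q (extendByZero H) N := by
  intro k hk
  rw [extendByZero_apply _ hk (by omega), hqrec k hk, sum_range]
  congr 1
  exact Finset.sum_congr rfl fun j _ => by rw [extendByZero_apply]

end MatrixEntries

theorem stmt7_general (n N : ℕ)
    (A : Matrix (Fin n) (Fin n) ℂ) (b : Fin n → ℂ) (hb : b ≠ 0)
    (v : ℕ → Fin n → ℂ)
    (horth : ∀ i j : ℕ, i < N → j < N → inn (v i) (v j) = if i = j then 1 else 0)
    (hv1 : v 0 = (((nrm b)⁻¹ : ℝ) : ℂ) • b)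
    (H : Matrix (Fin N) (Fin N) ℂ)
    (hsub : ∀ (k : ℕ) (hk : k + 1 < N),
      0 < (H ⟨k + 1, hk⟩ ⟨k, Nat.lt_of_succ_lt hk⟩).re ∧
        (H ⟨k + 1, hk⟩ ⟨k, Nat.lt_of_succ_lt hk⟩).im = 0)
    (harn : ∀ (k : ℕ) (hk : k + 1 < N),
      A.mulVec (v k) = ∑ j : Fin (k + 2),
        H ⟨(j : ℕ), Nat.lt_of_le_of_lt (Nat.lt_succ_iff.mp j.isLt) hk⟩
          ⟨k, Nat.lt_of_succ_lt hk⟩ • v (j : ℕ))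
    (q : ℕ → Polynomial ℂ) (hq0 : q 0 = 1)
    (hqrec : ∀ (k : ℕ) (hk : k + 1 < N),
      Polynomial.C (H ⟨k + 1, hk⟩ ⟨k, Nat.lt_of_succ_lt hk⟩) * q (k + 1) =
        Polynomial.X * q k -
          ∑ j : Fin (k + 1),
            Polynomial.C (H ⟨(j : ℕ), Nat.lt_trans j.isLt hk⟩ ⟨k, Nat.lt_of_succ_lt hk⟩) *
              q (j : ℕ))
    (u : ℂ → ℕ → Fin n → ℂ)
    (humem : ∀ (δ : ℂ) (k : ℕ), k < N →
      u δ k ∈ Submodule.span ℂ {x : Fin n → ℂ | ∃ j < k, x = (A - δ • 1).mulVec (v j)})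
    (huperp : ∀ (δ : ℂ) (k : ℕ), k < N →
      ∀ y ∈ Submodule.span ℂ {x : Fin n → ℂ | ∃ j < k, x = (A - δ • 1).mulVec (v j)},
        inn y (b - u δ k) = 0)
    (r : ℂ → ℕ → Fin n → ℂ) (hr : ∀ δ k, r δ k = b - u δ k)
 :
    ∀ (δ : ℂ) (k : ℕ), k < N →
      r δ k =
        (Polynomial.aeval A
            ((((sigmaP q δ k : ℝ) : ℂ) ^ 2)⁻¹ •
              ∑ j ∈ Finset.range (k + 1),
                Polynomial.C ((starRingEnd ℂ) ((q j).eval δ)) * q j)).mulVec b ∧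
      nrm (r δ k) = nrm b / sigmaP q δ k := by
  intro δ k hk
  have harn' := arnoldiRelation_extendByZero harn
  have hrec' := hessenbergRecurrence_extendByZero hqrec
  have hsub' : ∀ j, j + 1 < N → extendByZero H (j + 1) j ≠ 0 := fun j hj => by
    rw [extendByZero_apply _ hj (by omega)]
    exact Complex.ne_zero_of_re_pos (hsub j hj).1
  have hβ : b = (nrm b : ℂ) • v 0 := by
    rw [hv1, smul_smul, ← Complex.ofReal_mul, mul_inv_cancel₀ (nrm_pos hb).ne',
      Complex.ofReal_one, one_smul]
  have hrk := residual_eq_smul_residualDirection horth harn' hrec' hsub' hq0 δ hk hβ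
    (by rw [hr, sub_sub_cancel]; exact humem δ k hk) (fun w hw => hr δ k ▸ huperp δ k hk w hw)
  have hqv := aeval_mulVec_eq_of_arnoldi harn' hrec' hsub' hq0
  refine ⟨?_, ?_⟩
  · have hpb : ∀ p : ℂ[X], aeval A p *ᵥ b = (nrm b : ℂ) • aeval A p *ᵥ v 0 := fun p => by
      rw [← mulVec_smul, ← hβ]
    rw [hrk, map_smul, smul_mulVec, hpb, aeval_sum_C_mul_mulVec (fun j hj => hqv j (by omega)),
      smul_smul, residualDirection, div_eq_inv_mul]
  · have hσ := sigmaP_pos hq0 δ k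
    rw [hrk, nrm_smul, nrm_residualDirection horth δ hk, norm_div, norm_pow, Complex.norm_real,
      Complex.norm_real, Real.norm_of_nonneg (nrm_pos hb).le, Real.norm_of_nonneg hσ.le]
    field_simp

/-- The `k`-th GMRES residual for `(A - δI)x = b` (initial guess `0`)
satisfies `r_k(δ) = p_k(A) b` with `p_k = σ_k(δ)⁻² Σ_{j≤k} conj(q_j(δ)) q_j`; in
particular `‖r_k(δ)‖ = ‖b‖/σ_k(δ)`. -/
theorem stmt7 (n N : ℕ) (hN : 1 ≤ N) (hNn : N ≤ n)
    (A : Matrix (Fin n) (Fin n) ℂ) (b : Fin n → ℂ) (hb : b ≠ 0)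
    (v : ℕ → Fin n → ℂ)
    (horth : ∀ i j : ℕ, i < N → j < N → inn (v i) (v j) = if i = j then 1 else 0)
    (hv1 : v 0 = (((nrm b)⁻¹ : ℝ) : ℂ) • b)
    (H : Matrix (Fin N) (Fin N) ℂ)
    (hHess : ∀ i j : Fin N, (j : ℕ) + 1 < (i : ℕ) → H i j = 0)
    (hsub : ∀ (k : ℕ) (hk : k + 1 < N),
      0 < (H ⟨k + 1, hk⟩ ⟨k, Nat.lt_of_succ_lt hk⟩).re ∧
        (H ⟨k + 1, hk⟩ ⟨k, Nat.lt_of_succ_lt hk⟩).im = 0)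
    (harn : ∀ (k : ℕ) (hk : k + 1 < N),
      A.mulVec (v k) = ∑ j : Fin (k + 2),
        H ⟨(j : ℕ), Nat.lt_of_le_of_lt (Nat.lt_succ_iff.mp j.isLt) hk⟩
          ⟨k, Nat.lt_of_succ_lt hk⟩ • v (j : ℕ))
    (harnN : A.mulVec (v (N - 1)) =
      ∑ j : Fin N, H j ⟨N - 1, Nat.sub_lt hN Nat.one_pos⟩ • v (j : ℕ))
    (q : ℕ → Polynomial ℂ) (hq0 : q 0 = 1)
    (hqrec : ∀ (k : ℕ) (hk : k + 1 < N),
      Polynomial.C (H ⟨k + 1, hk⟩ ⟨k, Nat.lt_of_succ_lt hk⟩) * q (k + 1) =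
        Polynomial.X * q k -
          ∑ j : Fin (k + 1),
            Polynomial.C (H ⟨(j : ℕ), Nat.lt_trans j.isLt hk⟩ ⟨k, Nat.lt_of_succ_lt hk⟩) *
              q (j : ℕ))
    (u : ℂ → ℕ → Fin n → ℂ)
    (humem : ∀ (δ : ℂ) (k : ℕ), k < N →
      u δ k ∈ Submodule.span ℂ {x : Fin n → ℂ | ∃ j < k, x = (A - δ • 1).mulVec (v j)})
    (huperp : ∀ (δ : ℂ) (k : ℕ), k < N →
      ∀ y ∈ Submodule.span ℂ {x : Fin n → ℂ | ∃ j < k, x = (A - δ • 1).mulVec (v j)},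
        inn y (b - u δ k) = 0)
    (r : ℂ → ℕ → Fin n → ℂ) (hr : ∀ δ k, r δ k = b - u δ k)
    (hrne : ∀ (δ : ℂ) (k : ℕ), k < N → r δ k ≠ 0)
    (w : ℂ → ℕ → Fin n → ℂ) (hw : ∀ δ k, w δ k = (((nrm (r δ k))⁻¹ : ℝ) : ℂ) • r δ k)
 :
    ∀ (δ : ℂ) (k : ℕ), k < N →
      r δ k =
        (Polynomial.aeval A
            ((((sigmaP q δ k : ℝ) : ℂ) ^ 2)⁻¹ •
              ∑ j ∈ Finset.range (k + 1),
                Polynomial.C ((starRingEnd ℂ) ((q j).eval δ)) * q j)).mulVec b ∧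
      nrm (r δ k) = nrm b / sigmaP q δ k :=
  stmt7_general n N A b hb v horth hv1 H hsub harn q hq0 hqrec u humem huperp r hr
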